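/- For every odd integer p ≥ 3 and every even positive integer m, the series ∑_{n=1}^∞ [∑_{k=1}^{(p-1)/2} L_{2k·m·p^n}] / F_{m·p^{n+1}} converges with sum 1/F_{mp}. -/

import Mathlib

/-!
Binet's formulas give `F_N L_{D+N} = F_{D+2N} - F_D` for even `N` (since `(φψ)^N = 1`), so
`F_N ∑_{k=1}^{K} L_{2kN}` telescopes to `F_{(2K+1)N} - F_N`. With `N = m p^{n+1}` and
`2K + 1 = p`, the `n`-th term of the series is `1/F_{m p^{n+1}} - 1/F_{m p^{n+2}}`, and the
series telescopes to `1/F_{mp}` because `F_k → ∞`.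
-/

/-- The Lucas numbers: L 0 = 2, L 1 = 1, L (n+2) = L n + L (n+1). -/
def lucas : ℕ → ℕ
  | 0 => 2
  | 1 => 1
  | n + 2 => lucas n + lucas (n + 1)

open Filter Topology goldenRatio

theorem coe_lucas_eq (n : ℕ) : (lucas n : ℝ) = φ ^ n + ψ ^ n := by
  induction n using Nat.twoStepInduction with
  | zero => norm_num [lucas]
  | one => simp [lucas, Real.goldenRatio_add_goldenConj]
  | more n ih₁ ih₂ =>
    have hφ : φ ^ (n + 2) = φ ^ n * (φ + 1) := by rw [← Real.goldenRatio_sq]; ring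
    have hψ : ψ ^ (n + 2) = ψ ^ n * (ψ + 1) := by rw [← Real.goldenConj_sq]; ring
    rw [lucas, Nat.cast_add, ih₁, ih₂, hφ, hψ]
    ring

theorem fib_mul_lucas_add (D : ℕ) {N : ℕ} (hN : Even N) :
    (Nat.fib N : ℝ) * lucas (D + N) = Nat.fib (D + 2 * N) - Nat.fib D := by
  have hφψ : φ ^ N * ψ ^ N = 1 := by
    rw [← mul_pow, Real.goldenRatio_mul_goldenConj, hN.neg_one_pow]
  simp only [Real.coe_fib_eq, coe_lucas_eq, div_mul_eq_mul_div, ← sub_div]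
  congr 1
  rw [two_mul, pow_add, pow_add, pow_add, pow_add]
  linear_combination (ψ ^ D - φ ^ D) * hφψ

theorem fib_mul_sum_lucas (K : ℕ) {N : ℕ} (hN : Even N) :
    (Nat.fib N : ℝ) * ∑ k ∈ Finset.Icc 1 K, (lucas (2 * k * N) : ℝ) =
      Nat.fib ((2 * K + 1) * N) - Nat.fib N := by
  induction K with
  | zero => simp
  | succ K ih =>
    rw [Finset.sum_Icc_succ_top (by omega), mul_add, ih,
      show 2 * (K + 1) * N = (2 * K + 1) * N + N by ring, fib_mul_lucas_add _ hN,
      show (2 * K + 1) * N + 2 * N = (2 * (K + 1) + 1) * N by ring]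
    ring

theorem sum_lucas_div_fib_eq_sub (K : ℕ) {N : ℕ} (hN : Even N) (hN₀ : 0 < N) :
    (∑ k ∈ Finset.Icc 1 K, (lucas (2 * k * N) : ℝ)) / Nat.fib ((2 * K + 1) * N) =
      1 / Nat.fib N - 1 / Nat.fib ((2 * K + 1) * N) := by
  have hF : (0 : ℝ) < Nat.fib N := by exact_mod_cast Nat.fib_pos.2 hN₀
  have hF' : (0 : ℝ) < Nat.fib ((2 * K + 1) * N) := by
    exact_mod_cast Nat.fib_pos.2 (by positivity)
  rw [div_sub_div _ _ hF.ne' hF'.ne', div_eq_div_iff hF'.ne' (by positivity)]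
  linear_combination (Nat.fib ((2 * K + 1) * N) : ℝ) * fib_mul_sum_lucas K hN

theorem Nat.tendsto_fib_atTop : Tendsto Nat.fib atTop atTop :=
  (tendsto_add_atTop_iff_nat 2).1 Nat.fib_add_two_strictMono.tendsto_atTop

theorem hasSum_of_nonneg_of_eq_sub_succ {a f : ℕ → ℝ} {l : ℝ} (ha : ∀ n, 0 ≤ a n)
    (haf : ∀ n, a n = f n - f (n + 1)) (hf : Tendsto f atTop (𝓝 l)) : HasSum a (f 0 - l) := by
  rw [hasSum_iff_tendsto_nat_of_nonneg ha]
  simp only [haf, Finset.sum_range_sub']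
  exact hf.const_sub _

theorem stmt18 (p m : ℕ) (hp : Odd p) (hp' : 3 ≤ p) (hm : Even m) (hm' : 0 < m) :
    HasSum
      (fun n : ℕ =>
        (∑ k ∈ Finset.Icc 1 ((p - 1) / 2), (lucas (2 * k * m * p ^ (n + 1)) : ℝ)) /
          (Nat.fib (m * p ^ (n + 2)) : ℝ))
      (1 / (Nat.fib (m * p) : ℝ)) := by
  have hK : 2 * ((p - 1) / 2) + 1 = p := by obtain ⟨t, rfl⟩ := hp; omega
  have hpow : Tendsto (fun n => p ^ (n + 1)) atTop atTop :=
    (tendsto_pow_atTop_atTop_of_one_lt (by omega)).comp (tendsto_add_atTop_nat 1)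
  have hlim : Tendsto (fun n => 1 / (Nat.fib (m * p ^ (n + 1)) : ℝ)) atTop (𝓝 0) :=
    ((tendsto_natCast_atTop_atTop.comp (Nat.tendsto_fib_atTop.comp
      (hpow.const_mul_atTop' hm'))).inv_tendsto_atTop).congr fun _ => (one_div _).symm
  have hterm : ∀ n,
      (∑ k ∈ Finset.Icc 1 ((p - 1) / 2), (lucas (2 * k * m * p ^ (n + 1)) : ℝ)) /
          (Nat.fib (m * p ^ (n + 2)) : ℝ) =
        1 / Nat.fib (m * p ^ (n + 1)) - 1 / Nat.fib (m * p ^ (n + 1 + 1)) := fun n => by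
    have h := sum_lucas_div_fib_eq_sub ((p - 1) / 2) (hm.mul_right (p ^ (n + 1))) (by positivity)
    rw [hK, show p * (m * p ^ (n + 1)) = m * p ^ (n + 2) by ring] at h
    simpa only [mul_assoc] using h
  simpa using hasSum_of_nonneg_of_eq_sub_succ (fun n => by positivity) hterm hlim
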